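/- arXiv:1306.1100 — 3 statements merged into one kernel-verified Lean document; each statement's English description precedes it below -/
import Mathlib

section
/- Let (X, μ) be a measure space, let 0 < α < 1, and let f, g : X → ℝ be measurable functions that are strictly positive μ-almost everywhere. Assume that ∫_X g^α · f^{-1/α} dμ < ∞ and ∫_X f · g^{-1} dμ < ∞. Then (∫_X f^{1 - 1/α} dμ) · (∫_X g^{α-1} dμ) ≤ (∫_X g^α · f^{-1/α} dμ) · (∫_X f · g^{-1} dμ). -/
open MeasureTheory ENNReal

/-- inequality (4.11) in Lemma 4.3, case `0 < α < 1`: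
for measurable, a.e. strictly positive `f, g` with
`∫ g^α · f^{-1/α} dμ < ∞` and `∫ f · g⁻¹ dμ < ∞`, one has
`(∫ f^{1-1/α}) · (∫ g^{α-1}) ≤ (∫ g^α · f^{-1/α}) · (∫ f · g⁻¹)`. -/
theorem alphaGauss_key_integral_inequality
    {X : Type*} [MeasurableSpace X] (μ : Measure X)
    (α : ℝ) (hα0 : 0 < α) (hα1 : α < 1)
    (f g : X → ℝ) (hf : Measurable f) (hg : Measurable g)
    (hfpos : ∀ᵐ x ∂μ, 0 < f x) (hgpos : ∀ᵐ x ∂μ, 0 < g x)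
    (h1 : ∫⁻ x, ENNReal.ofReal (g x ^ α * f x ^ (-(1/α))) ∂μ < ∞)
    (h2 : ∫⁻ x, ENNReal.ofReal (f x * (g x)⁻¹) ∂μ < ∞) :
    (∫⁻ x, ENNReal.ofReal (f x ^ (1 - 1/α)) ∂μ) *
      (∫⁻ x, ENNReal.ofReal (g x ^ (α - 1)) ∂μ) ≤
    (∫⁻ x, ENNReal.ofReal (g x ^ α * f x ^ (-(1/α))) ∂μ) *
      (∫⁻ x, ENNReal.ofReal (f x * (g x)⁻¹) ∂μ) := by
  set s : ℝ := 1/(1+α) with hs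
  set t : ℝ := α/(1+α) with ht
  have h1α : (0:ℝ) < 1 + α := by linarith
  have hs0 : 0 ≤ s := by positivity
  have ht0 : 0 ≤ t := by positivity
  have hst : s + t = 1 := by rw [hs, ht]; field_simp
  set F : X → ℝ≥0∞ := fun x => ENNReal.ofReal (g x ^ α * f x ^ (-(1/α))) with hF
  set G : X → ℝ≥0∞ := fun x => ENNReal.ofReal (f x * (g x)⁻¹) with hG
  have hFm : AEMeasurable F μ := by rw [hF]; fun_prop
  have hGm : AEMeasurable G μ := by rw [hG]; fun_prop
  -- pointwise identities
  have hpt : ∀ᵐ x ∂μ, ENNReal.ofReal (f x ^ (1 - 1/α)) = F x ^ s * G x ^ t ∧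
      ENNReal.ofReal (g x ^ (α - 1)) = F x ^ t * G x ^ s := by
    filter_upwards [hfpos, hgpos] with x hfx hgx
    have hfgx : 0 < g x ^ α * f x ^ (-(1/α)) := by positivity
    have hfg2 : 0 < f x * (g x)⁻¹ := by positivity
    have e1 : (g x ^ α * f x ^ (-(1/α))) ^ s * (f x * (g x)⁻¹) ^ t = f x ^ (1 - 1/α) := by
      rw [Real.mul_rpow (by positivity) (by positivity),
        Real.mul_rpow (by positivity) (by positivity),
        ← Real.rpow_mul hgx.le, ← Real.rpow_mul hfx.le,
        ← Real.rpow_neg_one (g x), ← Real.rpow_mul hgx.le]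
      have comb : g x ^ (α * s) * f x ^ (-(1/α) * s) * (f x ^ t * g x ^ (-1 * t))
          = g x ^ (α * s + -1 * t) * f x ^ (-(1/α) * s + t) := by
        rw [Real.rpow_add hgx, Real.rpow_add hfx]; ring
      rw [comb, show α * s + -1 * t = 0 by rw [hs, ht]; ring,
        show -(1/α) * s + t = 1 - 1/α by
          rw [hs, ht]; field_simp; ring,
        Real.rpow_zero, one_mul]
    have e2 : (g x ^ α * f x ^ (-(1/α))) ^ t * (f x * (g x)⁻¹) ^ s = g x ^ (α - 1) := by
      rw [Real.mul_rpow (by positivity) (by positivity),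
        Real.mul_rpow (by positivity) (by positivity),
        ← Real.rpow_mul hgx.le, ← Real.rpow_mul hfx.le,
        ← Real.rpow_neg_one (g x), ← Real.rpow_mul hgx.le]
      have comb : g x ^ (α * t) * f x ^ (-(1/α) * t) * (f x ^ s * g x ^ (-1 * s))
          = g x ^ (α * t + -1 * s) * f x ^ (-(1/α) * t + s) := by
        rw [Real.rpow_add hgx, Real.rpow_add hfx]; ring
      rw [comb, show α * t + -1 * s = α - 1 by
          rw [hs, ht]; field_simp; ring,
        show -(1/α) * t + s = 0 by
          rw [hs, ht]; field_simp; ring,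
        Real.rpow_zero, mul_one]
    constructor
    · rw [← e1, ENNReal.ofReal_mul (by positivity), hF, hG,
        ENNReal.ofReal_rpow_of_pos hfgx, ENNReal.ofReal_rpow_of_pos hfg2]
    · rw [← e2, ENNReal.ofReal_mul (by positivity), hF, hG,
        ENNReal.ofReal_rpow_of_pos hfgx, ENNReal.ofReal_rpow_of_pos hfg2]
  have key1 : (∫⁻ x, ENNReal.ofReal (f x ^ (1 - 1/α)) ∂μ) ≤
      (∫⁻ x, F x ∂μ) ^ s * (∫⁻ x, G x ∂μ) ^ t := by
    calc (∫⁻ x, ENNReal.ofReal (f x ^ (1 - 1/α)) ∂μ) = ∫⁻ x, F x ^ s * G x ^ t ∂μ :=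
          lintegral_congr_ae (hpt.mono fun x hx => hx.1)
      _ ≤ _ := ENNReal.lintegral_mul_norm_pow_le hFm hGm hs0 ht0 hst
  have key2 : (∫⁻ x, ENNReal.ofReal (g x ^ (α - 1)) ∂μ) ≤
      (∫⁻ x, F x ∂μ) ^ t * (∫⁻ x, G x ∂μ) ^ s := by
    calc (∫⁻ x, ENNReal.ofReal (g x ^ (α - 1)) ∂μ) = ∫⁻ x, F x ^ t * G x ^ s ∂μ :=
          lintegral_congr_ae (hpt.mono fun x hx => hx.2)
      _ ≤ _ := ENNReal.lintegral_mul_norm_pow_le hFm hGm ht0 hs0 (by linarith)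
  calc (∫⁻ x, ENNReal.ofReal (f x ^ (1 - 1/α)) ∂μ) *
        (∫⁻ x, ENNReal.ofReal (g x ^ (α - 1)) ∂μ)
      ≤ ((∫⁻ x, F x ∂μ) ^ s * (∫⁻ x, G x ∂μ) ^ t) *
        ((∫⁻ x, F x ∂μ) ^ t * (∫⁻ x, G x ∂μ) ^ s) := mul_le_mul' key1 key2
    _ = (∫⁻ x, F x ∂μ) ^ (s + t) * (∫⁻ x, G x ∂μ) ^ (t + s) := by
        rw [ENNReal.rpow_add_of_nonneg _ _ hs0 ht0, ENNReal.rpow_add_of_nonneg _ _ ht0 hs0]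
        ring
    _ = (∫⁻ x, F x ∂μ) * (∫⁻ x, G x ∂μ) := by
        rw [hst, show t + s = 1 by linarith, ENNReal.rpow_one, ENNReal.rpow_one]
end

section
/- Let (X, μ) be a measure space, let n ≥ 1 be an integer, let 0 < α < 1, and let f, g : X → ℝ be measurable functions that are strictly positive μ-almost everywhere. Assume ∫_X g^α · f^{-1/α} dμ < ∞ and ∫_X f · g^{-1} dμ = n + 1. Then (1/(n+1)) · (∫_X f^{1 - 1/α} dμ) · (∫_X g^{α-1} dμ) ≤ ∫_X g^α · f^{-1/α} dμ. -/
/-!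
Write `U = f / g` and `V = g^α f^{-1/α}`. With `θ = α / (α + 1)` one has pointwise
`f^{1-1/α} = U^θ V^{1-θ}` and `g^{α-1} = U^{1-θ} V^θ`, so Hölder's inequality bounds the two
integrals on the left by `(∫U)^θ (∫V)^{1-θ}` and `(∫U)^{1-θ} (∫V)^θ`. Their product is
`(∫U)(∫V) = (n+1) ∫V`.
-/

open MeasureTheory ENNReal

namespace ENNReal

theorem lintegral_rpow_mul_rpow_mul_swap_le {X : Type*} [MeasurableSpace X] {μ : Measure X}
    {U V : X → ℝ≥0∞} (hU : AEMeasurable U μ) (hV : AEMeasurable V μ)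
    {θ : ℝ} (hθ0 : 0 ≤ θ) (hθ1 : θ ≤ 1) :
    (∫⁻ x, U x ^ θ * V x ^ (1 - θ) ∂μ) * (∫⁻ x, U x ^ (1 - θ) * V x ^ θ ∂μ) ≤
      (∫⁻ x, U x ∂μ) * ∫⁻ x, V x ∂μ := by
  have hθ1' : 0 ≤ 1 - θ := sub_nonneg.2 hθ1
  calc (∫⁻ x, U x ^ θ * V x ^ (1 - θ) ∂μ) * (∫⁻ x, U x ^ (1 - θ) * V x ^ θ ∂μ)
      ≤ ((∫⁻ x, U x ∂μ) ^ θ * (∫⁻ x, V x ∂μ) ^ (1 - θ)) *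
          ((∫⁻ x, U x ∂μ) ^ (1 - θ) * (∫⁻ x, V x ∂μ) ^ θ) := by
        gcongr
        · exact lintegral_mul_norm_pow_le hU hV hθ0 hθ1' (add_sub_cancel θ 1)
        · exact lintegral_mul_norm_pow_le hU hV hθ1' hθ0 (sub_add_cancel 1 θ)
    _ = (∫⁻ x, U x ∂μ) ^ (θ + (1 - θ)) * (∫⁻ x, V x ∂μ) ^ ((1 - θ) + θ) := by
        rw [rpow_add_of_nonneg _ _ hθ0 hθ1', rpow_add_of_nonneg _ _ hθ1' hθ0]
        ring
    _ = (∫⁻ x, U x ∂μ) * ∫⁻ x, V x ∂μ := by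
        rw [add_sub_cancel, sub_add_cancel, rpow_one, rpow_one]

theorem ofReal_mul_inv_rpow_mul_ofReal_rpow_mul_rpow {a b : ℝ} (ha : 0 < a) (hb : 0 < b)
    (α p q : ℝ) :
    ENNReal.ofReal (a * b⁻¹) ^ p * ENNReal.ofReal (b ^ α * a ^ (-(1 / α))) ^ q =
      ENNReal.ofReal (a ^ (p - q / α) * b ^ (α * q - p)) := by
  have hab : a ^ (p - q / α) * b ^ (α * q - p) =
      (a * b⁻¹) ^ p * (b ^ α * a ^ (-(1 / α))) ^ q := by
    rw [Real.mul_rpow ha.le (inv_nonneg.2 hb.le),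
      Real.mul_rpow (Real.rpow_nonneg hb.le _) (Real.rpow_nonneg ha.le _),
      ← Real.rpow_mul hb.le, ← Real.rpow_mul ha.le, Real.inv_rpow hb.le, ← Real.rpow_neg hb.le,
      sub_eq_add_neg, sub_eq_add_neg, Real.rpow_add ha, Real.rpow_add hb]
    ring_nf
  have hU : 0 < a * b⁻¹ := by positivity
  have hV : 0 < b ^ α * a ^ (-(1 / α)) := by positivity
  rw [hab, ENNReal.ofReal_mul (Real.rpow_nonneg hU.le _), ofReal_rpow_of_pos hU,
    ofReal_rpow_of_pos hV]

end ENNReal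

theorem alphaGauss_monotonicity_core_inequality_general
    {X : Type*} [MeasurableSpace X] (μ : Measure X)
    (n : ℕ)
    (α : ℝ) (hα0 : 0 < α)
    (f g : X → ℝ) (hf : Measurable f) (hg : Measurable g)
    (hfpos : ∀ᵐ x ∂μ, 0 < f x) (hgpos : ∀ᵐ x ∂μ, 0 < g x)
    (h2 : ∫⁻ x, ENNReal.ofReal (f x * (g x)⁻¹) ∂μ = (n : ℝ≥0∞) + 1) :
    (1 / ((n : ℝ≥0∞) + 1)) * (∫⁻ x, ENNReal.ofReal (f x ^ (1 - 1/α)) ∂μ) *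
      (∫⁻ x, ENNReal.ofReal (g x ^ (α - 1)) ∂μ) ≤
    ∫⁻ x, ENNReal.ofReal (g x ^ α * f x ^ (-(1/α))) ∂μ := by
  set θ := α / (α + 1)
  have hθ0 : 0 ≤ θ := by positivity
  have hθ1 : θ ≤ 1 := (div_le_one (by linarith)).2 (by linarith)
  set U := fun x ↦ ENNReal.ofReal (f x * (g x)⁻¹)
  set V := fun x ↦ ENNReal.ofReal (g x ^ α * f x ^ (-(1 / α)))
  have hf_eq : ∫⁻ x, ENNReal.ofReal (f x ^ (1 - 1 / α)) ∂μ = ∫⁻ x, U x ^ θ * V x ^ (1 - θ) ∂μ := by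
    refine lintegral_congr_ae ?_
    filter_upwards [hfpos, hgpos] with x hfx hgx
    rw [ofReal_mul_inv_rpow_mul_ofReal_rpow_mul_rpow hfx hgx,
      show θ - (1 - θ) / α = 1 - 1 / α by simp only [θ]; field_simp; ring,
      show α * (1 - θ) - θ = 0 by simp only [θ]; field_simp; ring, Real.rpow_zero, mul_one]
  have hg_eq : ∫⁻ x, ENNReal.ofReal (g x ^ (α - 1)) ∂μ = ∫⁻ x, U x ^ (1 - θ) * V x ^ θ ∂μ := by
    refine lintegral_congr_ae ?_
    filter_upwards [hfpos, hgpos] with x hfx hgx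
    rw [ofReal_mul_inv_rpow_mul_ofReal_rpow_mul_rpow hfx hgx,
      show 1 - θ - θ / α = 0 by simp only [θ]; field_simp; ring,
      show α * θ - (1 - θ) = α - 1 by simp only [θ]; field_simp; ring, Real.rpow_zero, one_mul]
  calc (1 / ((n : ℝ≥0∞) + 1)) * (∫⁻ x, ENNReal.ofReal (f x ^ (1 - 1/α)) ∂μ) *
        (∫⁻ x, ENNReal.ofReal (g x ^ (α - 1)) ∂μ)
      ≤ (1 / ((n : ℝ≥0∞) + 1)) * ((∫⁻ x, U x ∂μ) * ∫⁻ x, V x ∂μ) := by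
        rw [hf_eq, hg_eq, mul_assoc]
        exact mul_le_mul_right (lintegral_rpow_mul_rpow_mul_swap_le
          (by simp only [U]; fun_prop) (by simp only [V]; fun_prop) hθ0 hθ1) _
    _ = ∫⁻ x, V x ∂μ := by
        rw [h2, ← mul_assoc, one_div, ENNReal.inv_mul_cancel (by simp) (by simp), one_mul]

/-- inequality (4.7) with `β = 1/α` in Lemma 4.3, Case 1:
for measurable, a.e. strictly positive `f, g` with
`∫ g^α · f^{-1/α} dμ < ∞` and the normalization `∫ f · g⁻¹ dμ = n + 1`, one has
`(1/(n+1)) · (∫ f^{1-1/α}) · (∫ g^{α-1}) ≤ ∫ g^α · f^{-1/α}`. -/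
theorem alphaGauss_monotonicity_core_inequality
    {X : Type*} [MeasurableSpace X] (μ : Measure X)
    (n : ℕ) (hn : 1 ≤ n)
    (α : ℝ) (hα0 : 0 < α) (hα1 : α < 1)
    (f g : X → ℝ) (hf : Measurable f) (hg : Measurable g)
    (hfpos : ∀ᵐ x ∂μ, 0 < f x) (hgpos : ∀ᵐ x ∂μ, 0 < g x)
    (h1 : ∫⁻ x, ENNReal.ofReal (g x ^ α * f x ^ (-(1/α))) ∂μ < ∞)
    (h2 : ∫⁻ x, ENNReal.ofReal (f x * (g x)⁻¹) ∂μ = (n : ℝ≥0∞) + 1) :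
    (1 / ((n : ℝ≥0∞) + 1)) * (∫⁻ x, ENNReal.ofReal (f x ^ (1 - 1/α)) ∂μ) *
      (∫⁻ x, ENNReal.ofReal (g x ^ (α - 1)) ∂μ) ≤
    ∫⁻ x, ENNReal.ofReal (g x ^ α * f x ^ (-(1/α))) ∂μ :=
  alphaGauss_monotonicity_core_inequality_general μ n α hα0 f g hf hg hfpos hgpos h2
end

section
/- Let (X, μ) be a σ-finite measure space, let 0 < α < 1, and let f, g : X → ℝ be measurable functions that are strictly positive μ-almost everywhere. Assume that the four integrals ∫_X f^{1-1/α} dμ, ∫_X g^{α-1} dμ, ∫_X g^α · f^{-1/α} dμ and ∫_X f · g^{-1} dμ are all finite and strictly positive. Then equality (∫_X f^{1-1/α} dμ) · (∫_X g^{α-1} dμ) = (∫_X g^α · f^{-1/α} dμ) · (∫_X f · g^{-1} dμ) holds if and only if there exists a constant c > 0 such that g^α = c · f μ-almost everywhere. -/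
/-!
Put `u = g^α f^{-1/α}`, `v = f / g` and `P = 1/(1+α)`, `Q = α/(1+α)`, so that `P + Q = 1`.
Pointwise `f^{1-1/α} = u^P v^Q` and `g^{α-1} = u^Q v^P`, so by Hölder the two integrals on the
left are at most `(∫u)^P (∫v)^Q` and `(∫u)^Q (∫v)^P`, whose product is the right-hand side
`∫u · ∫v`. Equality therefore forces equality in the first Hölder inequality. For `u / ∫u` and
`v / ∫v`, which have unit mass, that is equality in the integrated weighted AM-GM inequality,
hence `u / ∫u = v / ∫v` a.e.; this says that `g^{1+α}` is a constant multiple of `f^{1+1/α}`.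
Conversely, if `g^α = c f` the two integrals on the left are `c⁻¹ ∫u` and `c ∫v`.
-/

open MeasureTheory ENNReal

theorem ENNReal.eq_of_mul_eq_mul_of_le_of_le {a b c d : ℝ≥0∞} (hac : a ≤ c) (hbd : b ≤ d)
    (hd0 : d ≠ 0) (hd : d ≠ ∞) (h : a * b = c * d) : a = c := by
  refine hac.antisymm (not_lt.1 fun hlt => ?_)
  have : a * b < c * d := calc
    a * b ≤ a * d := mul_le_mul_right hbd a
    _ < c * d := ENNReal.mul_lt_mul_left hd0 hd hlt
  exact this.ne h

namespace Real

theorem rpow_mul_rpow_rpow_mul_mul_inv_rpow {a b : ℝ} (ha : 0 < a) (hb : 0 < b) (r s P Q : ℝ) :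
    (b ^ r * a ^ s) ^ P * (a * b⁻¹) ^ Q = a ^ (s * P + Q) * b ^ (r * P - Q) := by
  rw [mul_rpow (by positivity) (by positivity), mul_rpow ha.le (by positivity), ← rpow_mul hb.le,
    ← rpow_mul ha.le, inv_rpow hb.le, rpow_add ha, rpow_sub hb]
  field_simp

variable {α a b : ℝ}

theorem rpow_one_sub_one_div_eq_rpow_mul_rpow (hα : 0 < α) (ha : 0 < a) (hb : 0 < b) :
    a ^ (1 - 1 / α) = (b ^ α * a ^ (-(1 / α))) ^ (1 / (1 + α)) * (a * b⁻¹) ^ (α / (1 + α)) := by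
  rw [rpow_mul_rpow_rpow_mul_mul_inv_rpow ha hb, show α * (1 / (1 + α)) - α / (1 + α) = 0 by ring,
    rpow_zero, mul_one]
  congr 1
  field_simp
  ring

theorem rpow_sub_one_eq_rpow_mul_rpow (hα : 0 < α) (ha : 0 < a) (hb : 0 < b) :
    b ^ (α - 1) = (b ^ α * a ^ (-(1 / α))) ^ (α / (1 + α)) * (a * b⁻¹) ^ (1 / (1 + α)) := by
  rw [rpow_mul_rpow_rpow_mul_mul_inv_rpow ha hb, show -(1 / α) * (α / (1 + α)) + 1 / (1 + α) = 0 by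
    field_simp; ring, rpow_zero, one_mul]
  congr 1
  field_simp
  ring

theorem rpow_eq_const_mul_of_rpow_mul_rpow_eq_const_mul {k : ℝ} (hα : 0 < α) (ha : 0 < a)
    (hb : 0 < b) (hk : 0 < k) (h : b ^ α * a ^ (-(1 / α)) = k * (a * b⁻¹)) :
    b ^ α = k ^ (α / (1 + α)) * a := by
  have hlog := congrArg log h
  rw [log_mul (by positivity) (by positivity), log_rpow hb, log_rpow ha,
    log_mul hk.ne' (by positivity), log_mul ha.ne' (by positivity), log_inv] at hlog
  apply log_injOn_pos (Set.mem_Ioi.2 (by positivity)) (Set.mem_Ioi.2 (by positivity))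
  rw [log_rpow hb, log_mul (by positivity) ha.ne', log_rpow hk]
  field_simp at hlog ⊢
  linear_combination hlog

end Real

section Holder

variable {X : Type*} [MeasurableSpace X] {μ : Measure X} {P Q : ℝ}

theorem lintegral_ofReal_rpow_mul_rpow_le (hP : 0 ≤ P) (hQ : 0 ≤ Q) (hPQ : P + Q = 1)
    {u v : X → ℝ} (hu : AEMeasurable u μ) (hv : AEMeasurable v μ)
    (hu0 : 0 ≤ᵐ[μ] u) (hv0 : 0 ≤ᵐ[μ] v) :
    ∫⁻ x, ENNReal.ofReal (u x ^ P * v x ^ Q) ∂μ ≤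
      (∫⁻ x, ENNReal.ofReal (u x) ∂μ) ^ P * (∫⁻ x, ENNReal.ofReal (v x) ∂μ) ^ Q := by
  refine le_of_eq_of_le (lintegral_congr_ae ?_)
    (lintegral_mul_norm_pow_le hu.ennreal_ofReal hv.ennreal_ofReal hP hQ hPQ)
  filter_upwards [hu0, hv0] with x hux hvx
  rw [ENNReal.ofReal_mul (Real.rpow_nonneg hux P), ofReal_rpow_of_nonneg hux hP,
    ofReal_rpow_of_nonneg hvx hQ]

theorem ae_eq_of_lintegral_ofReal_rpow_mul_rpow_eq_one (hP : 0 < P) (hQ : 0 < Q)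
    (hPQ : P + Q = 1) {p q : X → ℝ} (hp : AEMeasurable p μ) (hq : AEMeasurable q μ)
    (hp0 : 0 ≤ᵐ[μ] p) (hq0 : 0 ≤ᵐ[μ] q)
    (hp1 : ∫⁻ x, ENNReal.ofReal (p x) ∂μ = 1) (hq1 : ∫⁻ x, ENNReal.ofReal (q x) ∂μ = 1)
    (h : ∫⁻ x, ENNReal.ofReal (p x ^ P * q x ^ Q) ∂μ = 1) : p =ᵐ[μ] q := by
  have hmean : (fun x => ENNReal.ofReal (p x ^ P * q x ^ Q)) ≤ᵐ[μ]
      fun x => ENNReal.ofReal (P * p x + Q * q x) := by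
    filter_upwards [hp0, hq0] with x hpx hqx
    exact ENNReal.ofReal_le_ofReal
      (Real.geom_mean_le_arith_mean2_weighted hP.le hQ.le hpx hqx hPQ)
  have hmean_int : ∫⁻ x, ENNReal.ofReal (P * p x + Q * q x) ∂μ = 1 := by
    calc ∫⁻ x, ENNReal.ofReal (P * p x + Q * q x) ∂μ
        = ∫⁻ x, ENNReal.ofReal P * ENNReal.ofReal (p x)
            + ENNReal.ofReal Q * ENNReal.ofReal (q x) ∂μ := by
          refine lintegral_congr_ae ?_
          filter_upwards [hp0, hq0] with x hpx hqx
          rw [ENNReal.ofReal_add (mul_nonneg hP.le hpx) (mul_nonneg hQ.le hqx),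
            ENNReal.ofReal_mul hP.le, ENNReal.ofReal_mul hQ.le]
      _ = ENNReal.ofReal (P + Q) := by
          rw [lintegral_add_left' (hp.ennreal_ofReal.const_mul _),
            lintegral_const_mul' _ _ ofReal_ne_top, lintegral_const_mul' _ _ ofReal_ne_top,
            hp1, hq1, mul_one, mul_one, ENNReal.ofReal_add hP.le hQ.le]
      _ = 1 := by rw [hPQ, ENNReal.ofReal_one]
  have hae := ae_eq_of_ae_le_of_lintegral_le hmean (by simp [h])
    ((hp.const_mul P).add (hq.const_mul Q)).ennreal_ofReal (by rw [h, hmean_int])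
  filter_upwards [hae, hp0, hq0] with x hx hpx hqx
  rw [ENNReal.ofReal_eq_ofReal_iff (mul_nonneg (Real.rpow_nonneg hpx P) (Real.rpow_nonneg hqx Q))
    (add_nonneg (mul_nonneg hP.le hpx) (mul_nonneg hQ.le hqx))] at hx
  exact (Real.geom_mean_eq_arith_mean2_weighted_iff_of_pos hP hQ hpx hqx hPQ).1 hx

theorem lintegral_ofReal_div_toReal_lintegral {u : X → ℝ}
    (hU0 : ∫⁻ x, ENNReal.ofReal (u x) ∂μ ≠ 0) (hU : ∫⁻ x, ENNReal.ofReal (u x) ∂μ ≠ ∞) :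
    ∫⁻ x, ENNReal.ofReal (u x / (∫⁻ y, ENNReal.ofReal (u y) ∂μ).toReal) ∂μ = 1 := by
  simp_rw [ENNReal.ofReal_div_of_pos (toReal_pos hU0 hU), ofReal_toReal hU, div_eq_mul_inv]
  rw [lintegral_mul_const' _ _ (ENNReal.inv_ne_top.2 hU0), ENNReal.mul_inv_cancel hU0 hU]

theorem exists_ae_eq_const_mul_of_lintegral_ofReal_rpow_mul_rpow_eq (hP : 0 < P) (hQ : 0 < Q)
    (hPQ : P + Q = 1) {u v : X → ℝ} (hu : AEMeasurable u μ) (hv : AEMeasurable v μ)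
    (hu0 : 0 ≤ᵐ[μ] u) (hv0 : 0 ≤ᵐ[μ] v)
    (hU0 : ∫⁻ x, ENNReal.ofReal (u x) ∂μ ≠ 0) (hU : ∫⁻ x, ENNReal.ofReal (u x) ∂μ ≠ ∞)
    (hV0 : ∫⁻ x, ENNReal.ofReal (v x) ∂μ ≠ 0) (hV : ∫⁻ x, ENNReal.ofReal (v x) ∂μ ≠ ∞)
    (h : ∫⁻ x, ENNReal.ofReal (u x ^ P * v x ^ Q) ∂μ =
      (∫⁻ x, ENNReal.ofReal (u x) ∂μ) ^ P * (∫⁻ x, ENNReal.ofReal (v x) ∂μ) ^ Q) :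
    ∃ c : ℝ, 0 < c ∧ ∀ᵐ x ∂μ, u x = c * v x := by
  set U := ∫⁻ x, ENNReal.ofReal (u x) ∂μ
  set V := ∫⁻ x, ENNReal.ofReal (v x) ∂μ
  have ha := toReal_pos hU0 hU
  have hb := toReal_pos hV0 hV
  have hUV : U ^ P * V ^ Q = ENNReal.ofReal (U.toReal ^ P * V.toReal ^ Q) := by
    rw [ENNReal.ofReal_mul (by positivity), ← ofReal_rpow_of_pos ha, ← ofReal_rpow_of_pos hb,
      ofReal_toReal hU, ofReal_toReal hV]
  have hscale : ∫⁻ x, ENNReal.ofReal (u x ^ P * v x ^ Q) ∂μ =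
      (U ^ P * V ^ Q) * ∫⁻ x, ENNReal.ofReal
        ((u x / U.toReal) ^ P * (v x / V.toReal) ^ Q) ∂μ := by
    rw [hUV, ← lintegral_const_mul' _ _ ofReal_ne_top]
    refine lintegral_congr_ae ?_
    filter_upwards [hu0, hv0] with x hux hvx
    rw [← ENNReal.ofReal_mul (by positivity), Real.div_rpow hux ha.le, Real.div_rpow hvx hb.le]
    congr 1
    field_simp
  have hUV0 : U ^ P * V ^ Q ≠ 0 := hUV ▸ (ENNReal.ofReal_pos.2 (by positivity)).ne'
  have hUVtop : U ^ P * V ^ Q ≠ ∞ := hUV ▸ ofReal_ne_top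
  have hnormalized := ae_eq_of_lintegral_ofReal_rpow_mul_rpow_eq_one hP hQ hPQ
    (hu.div_const _) (hv.div_const _)
    (by filter_upwards [hu0] with x hx using div_nonneg hx ha.le)
    (by filter_upwards [hv0] with x hx using div_nonneg hx hb.le)
    (lintegral_ofReal_div_toReal_lintegral hU0 hU) (lintegral_ofReal_div_toReal_lintegral hV0 hV)
    ((ENNReal.mul_eq_left hUV0 hUVtop).1 (hscale.symm.trans h))
  refine ⟨U.toReal / V.toReal, div_pos ha hb, ?_⟩
  filter_upwards [hnormalized] with x hx
  have hx' : u x / U.toReal = v x / V.toReal := hx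
  field_simp at hx' ⊢
  linarith

end Holder

section AlphaGauss

variable {X : Type*} [MeasurableSpace X] {μ : Measure X} {α : ℝ} {f g : X → ℝ}

theorem exists_rpow_eq_const_mul_of_lintegral_mul_lintegral_eq (hα : 0 < α)
    (hf : AEMeasurable f μ) (hg : AEMeasurable g μ)
    (hfpos : ∀ᵐ x ∂μ, 0 < f x) (hgpos : ∀ᵐ x ∂μ, 0 < g x)
    (hC0 : ∫⁻ x, ENNReal.ofReal (g x ^ α * f x ^ (-(1/α))) ∂μ ≠ 0)
    (hC : ∫⁻ x, ENNReal.ofReal (g x ^ α * f x ^ (-(1/α))) ∂μ ≠ ∞)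
    (hD0 : ∫⁻ x, ENNReal.ofReal (f x * (g x)⁻¹) ∂μ ≠ 0)
    (hD : ∫⁻ x, ENNReal.ofReal (f x * (g x)⁻¹) ∂μ ≠ ∞)
    (h : (∫⁻ x, ENNReal.ofReal (f x ^ (1 - 1/α)) ∂μ) *
        (∫⁻ x, ENNReal.ofReal (g x ^ (α - 1)) ∂μ) =
      (∫⁻ x, ENNReal.ofReal (g x ^ α * f x ^ (-(1/α))) ∂μ) *
        (∫⁻ x, ENNReal.ofReal (f x * (g x)⁻¹) ∂μ)) :
    ∃ c : ℝ, 0 < c ∧ ∀ᵐ x ∂μ, g x ^ α = c * f x := by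
  set u := fun x => g x ^ α * f x ^ (-(1/α))
  set v := fun x => f x * (g x)⁻¹
  set C := ∫⁻ x, ENNReal.ofReal (u x) ∂μ
  set D := ∫⁻ x, ENNReal.ofReal (v x) ∂μ
  set P := 1 / (1 + α)
  set Q := α / (1 + α)
  have hP : 0 < P := by positivity
  have hQ : 0 < Q := by positivity
  have hPQ : P + Q = 1 := by simp only [P, Q]; field_simp
  have hu : AEMeasurable u μ := (hg.pow_const _).mul (hf.pow_const _)
  have hv : AEMeasurable v μ := hf.mul hg.inv
  have hu0 : 0 ≤ᵐ[μ] u := by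
    filter_upwards [hfpos, hgpos] with x hfx hgx using by positivity
  have hv0 : 0 ≤ᵐ[μ] v := by
    filter_upwards [hfpos, hgpos] with x hfx hgx using by positivity
  have hA : ∫⁻ x, ENNReal.ofReal (f x ^ (1 - 1/α)) ∂μ =
      ∫⁻ x, ENNReal.ofReal (u x ^ P * v x ^ Q) ∂μ := by
    refine lintegral_congr_ae ?_
    filter_upwards [hfpos, hgpos] with x hfx hgx
    rw [Real.rpow_one_sub_one_div_eq_rpow_mul_rpow hα hfx hgx]
  have hB : ∫⁻ x, ENNReal.ofReal (g x ^ (α - 1)) ∂μ =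
      ∫⁻ x, ENNReal.ofReal (u x ^ Q * v x ^ P) ∂μ := by
    refine lintegral_congr_ae ?_
    filter_upwards [hfpos, hgpos] with x hfx hgx
    rw [Real.rpow_sub_one_eq_rpow_mul_rpow hα hfx hgx]
  have hCD : C ^ P * D ^ Q * (C ^ Q * D ^ P) = C * D := by
    rw [mul_mul_mul_comm, ← ENNReal.rpow_add _ _ hC0 hC, ← ENNReal.rpow_add _ _ hD0 hD, hPQ,
      add_comm, hPQ, ENNReal.rpow_one, ENNReal.rpow_one]
  have hHolder : ∫⁻ x, ENNReal.ofReal (u x ^ P * v x ^ Q) ∂μ = C ^ P * D ^ Q :=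
    ENNReal.eq_of_mul_eq_mul_of_le_of_le
      (lintegral_ofReal_rpow_mul_rpow_le hP.le hQ.le hPQ hu hv hu0 hv0)
      (lintegral_ofReal_rpow_mul_rpow_le hQ.le hP.le (by linarith) hu hv hu0 hv0)
      (ENNReal.mul_pos (ENNReal.rpow_pos (pos_iff_ne_zero.2 hC0) hC).ne'
        (ENNReal.rpow_pos (pos_iff_ne_zero.2 hD0) hD).ne').ne'
      (ENNReal.mul_ne_top (ENNReal.rpow_ne_top_of_nonneg hQ.le hC)
        (ENNReal.rpow_ne_top_of_nonneg hP.le hD))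
      (by rw [← hA, ← hB, h, hCD])
  obtain ⟨k, hk, huv⟩ := exists_ae_eq_const_mul_of_lintegral_ofReal_rpow_mul_rpow_eq
    hP hQ hPQ hu hv hu0 hv0 hC0 hC hD0 hD hHolder
  refine ⟨k ^ (α / (1 + α)), by positivity, ?_⟩
  filter_upwards [huv, hfpos, hgpos] with x hx hfx hgx
  exact Real.rpow_eq_const_mul_of_rpow_mul_rpow_eq_const_mul hα hfx hgx hk hx

theorem lintegral_mul_lintegral_eq_of_rpow_eq_const_mul {c : ℝ} (hc : 0 < c)
    (hfpos : ∀ᵐ x ∂μ, 0 < f x) (hgpos : ∀ᵐ x ∂μ, 0 < g x)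
    (hcf : ∀ᵐ x ∂μ, g x ^ α = c * f x) :
    (∫⁻ x, ENNReal.ofReal (f x ^ (1 - 1/α)) ∂μ) *
        (∫⁻ x, ENNReal.ofReal (g x ^ (α - 1)) ∂μ) =
      (∫⁻ x, ENNReal.ofReal (g x ^ α * f x ^ (-(1/α))) ∂μ) *
        (∫⁻ x, ENNReal.ofReal (f x * (g x)⁻¹) ∂μ) := by
  have hA : ∫⁻ x, ENNReal.ofReal (f x ^ (1 - 1/α)) ∂μ =
      ENNReal.ofReal c⁻¹ * ∫⁻ x, ENNReal.ofReal (g x ^ α * f x ^ (-(1/α))) ∂μ := by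
    rw [← lintegral_const_mul' _ _ ofReal_ne_top]
    refine lintegral_congr_ae ?_
    filter_upwards [hfpos, hcf] with x hfx hx
    rw [← ENNReal.ofReal_mul (by positivity), hx, sub_eq_add_neg, Real.rpow_add hfx,
      Real.rpow_one]
    field_simp
  have hB : ∫⁻ x, ENNReal.ofReal (g x ^ (α - 1)) ∂μ =
      ENNReal.ofReal c * ∫⁻ x, ENNReal.ofReal (f x * (g x)⁻¹) ∂μ := by
    rw [← lintegral_const_mul' _ _ ofReal_ne_top]
    refine lintegral_congr_ae ?_
    filter_upwards [hgpos, hcf] with x hgx hx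
    rw [← ENNReal.ofReal_mul hc.le, Real.rpow_sub_one hgx.ne', hx, mul_div_assoc,
      div_eq_mul_inv]
  rw [hA, hB, mul_mul_mul_comm, ← ENNReal.ofReal_mul (by positivity), inv_mul_cancel₀ hc.ne',
    ENNReal.ofReal_one, one_mul]

end AlphaGauss

theorem alphaGauss_key_integral_equality_iff_general
    {X : Type*} [MeasurableSpace X] (μ : Measure X)
    (α : ℝ) (hα0 : 0 < α)
    (f g : X → ℝ) (hf : Measurable f) (hg : Measurable g)
    (hfpos : ∀ᵐ x ∂μ, 0 < f x) (hgpos : ∀ᵐ x ∂μ, 0 < g x)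
    (hI3 : 0 < ∫⁻ x, ENNReal.ofReal (g x ^ α * f x ^ (-(1/α))) ∂μ)
    (hI3' : ∫⁻ x, ENNReal.ofReal (g x ^ α * f x ^ (-(1/α))) ∂μ < ∞)
    (hI4 : 0 < ∫⁻ x, ENNReal.ofReal (f x * (g x)⁻¹) ∂μ)
    (hI4' : ∫⁻ x, ENNReal.ofReal (f x * (g x)⁻¹) ∂μ < ∞) :
    (∫⁻ x, ENNReal.ofReal (f x ^ (1 - 1/α)) ∂μ) *
        (∫⁻ x, ENNReal.ofReal (g x ^ (α - 1)) ∂μ) =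
      (∫⁻ x, ENNReal.ofReal (g x ^ α * f x ^ (-(1/α))) ∂μ) *
        (∫⁻ x, ENNReal.ofReal (f x * (g x)⁻¹) ∂μ) ↔
    ∃ c : ℝ, 0 < c ∧ ∀ᵐ x ∂μ, g x ^ α = c * f x := by
  constructor
  · exact exists_rpow_eq_const_mul_of_lintegral_mul_lintegral_eq hα0 hf.aemeasurable
      hg.aemeasurable hfpos hgpos hI3.ne' hI3'.ne hI4.ne' hI4'.ne
  · rintro ⟨c, hc, hcf⟩
    exact lintegral_mul_lintegral_eq_of_rpow_eq_const_mul hc hfpos hgpos hcf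

/-- equality case of inequality (4.11) in Lemma 4.3, case `0 < α < 1`:
on a σ-finite measure space, for measurable, a.e. strictly positive `f, g` whose four
relevant integrals are finite and strictly positive, equality
`(∫ f^{1-1/α}) · (∫ g^{α-1}) = (∫ g^α · f^{-1/α}) · (∫ f · g⁻¹)` holds if and only if
`g^α = c · f` a.e. for some constant `c > 0`. -/
theorem alphaGauss_key_integral_equality_iff
    {X : Type*} [MeasurableSpace X] (μ : Measure X) [SigmaFinite μ]
    (α : ℝ) (hα0 : 0 < α) (hα1 : α < 1)
    (f g : X → ℝ) (hf : Measurable f) (hg : Measurable g)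
    (hfpos : ∀ᵐ x ∂μ, 0 < f x) (hgpos : ∀ᵐ x ∂μ, 0 < g x)
    (hI1 : 0 < ∫⁻ x, ENNReal.ofReal (f x ^ (1 - 1/α)) ∂μ)
    (hI1' : ∫⁻ x, ENNReal.ofReal (f x ^ (1 - 1/α)) ∂μ < ∞)
    (hI2 : 0 < ∫⁻ x, ENNReal.ofReal (g x ^ (α - 1)) ∂μ)
    (hI2' : ∫⁻ x, ENNReal.ofReal (g x ^ (α - 1)) ∂μ < ∞)
    (hI3 : 0 < ∫⁻ x, ENNReal.ofReal (g x ^ α * f x ^ (-(1/α))) ∂μ)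
    (hI3' : ∫⁻ x, ENNReal.ofReal (g x ^ α * f x ^ (-(1/α))) ∂μ < ∞)
    (hI4 : 0 < ∫⁻ x, ENNReal.ofReal (f x * (g x)⁻¹) ∂μ)
    (hI4' : ∫⁻ x, ENNReal.ofReal (f x * (g x)⁻¹) ∂μ < ∞) :
    (∫⁻ x, ENNReal.ofReal (f x ^ (1 - 1/α)) ∂μ) *
        (∫⁻ x, ENNReal.ofReal (g x ^ (α - 1)) ∂μ) =
      (∫⁻ x, ENNReal.ofReal (g x ^ α * f x ^ (-(1/α))) ∂μ) *
        (∫⁻ x, ENNReal.ofReal (f x * (g x)⁻¹) ∂μ) ↔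
    ∃ c : ℝ, 0 < c ∧ ∀ᵐ x ∂μ, g x ^ α = c * f x :=
  alphaGauss_key_integral_equality_iff_general μ α hα0 f g hf hg hfpos hgpos hI3 hI3' hI4 hI4'
end
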